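/- arXiv:2111.14569 — 4 statements merged into one kernel-verified Lean document; each statement's English description precedes it below -/
import Mathlib

section
/- Let F : ℝ → ℝ satisfy F(r) → 1 as r → -∞, F' ≥ 0, (log F)'' ≥ 0 on ℝ, and F(r) = c·e^{c₊ r}(1 + O(e^{-ε r})) as r → +∞ for some c, c₊, ε > 0. Then (log F)'(r) = c₊ + O(e^{-(ε/2) r}) as r → +∞. -/
open Filter Asymptotics Real

lemma abs_log_le_two_mul (x : ℝ) (hx : 1/2 ≤ x) : |Real.log x| ≤ 2 * |x - 1| := by
  have hx0 : 0 < x := by linarith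
  rcases le_or_gt 1 x with h1 | h1
  · have h2 : Real.log x ≤ x - 1 := Real.log_le_sub_one_of_pos hx0
    have h3 : 0 ≤ Real.log x := Real.log_nonneg h1
    rw [abs_of_nonneg h3, abs_of_nonneg (by linarith)]
    linarith
  · have h2 : Real.log x⁻¹ ≤ x⁻¹ - 1 := Real.log_le_sub_one_of_pos (by positivity)
    rw [Real.log_inv] at h2
    have h3 : Real.log x ≤ 0 := Real.log_nonpos (le_of_lt hx0) (le_of_lt h1)
    have hxinv : x⁻¹ ≤ 2 := by
      rw [inv_le_comm₀ hx0 two_pos]; linarith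
    have h4 : x⁻¹ - 1 = (1 - x) / x := by field_simp
    rw [abs_of_nonpos h3, abs_of_nonpos (by linarith)]
    have : (1 - x) / x ≤ 2 * (1 - x) := by
      rw [div_le_iff₀ hx0]
      nlinarith
    linarith [h2.trans (h4.le.trans this)]

theorem stmt0 (F : ℝ → ℝ) (c cplus ε : ℝ)
    (hc : 0 < c) (hcplus : 0 < cplus) (hε : 0 < ε)
    (hFpos : ∀ r, 0 < F r)
    (hFsmooth : ContDiff ℝ (⊤ : ℕ∞) F)
    (hlim : Tendsto F atBot (nhds 1))
    (hF' : ∀ r, 0 ≤ deriv F r)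
    (hconv : ∀ r, 0 ≤ deriv (deriv (fun x => Real.log (F x))) r)
    (hgrowth : (fun r => F r / (c * Real.exp (cplus * r)) - 1) =O[atTop]
      (fun r => Real.exp (-ε * r))) :
    (fun r => deriv (fun x => Real.log (F x)) r - cplus) =O[atTop]
      (fun r => Real.exp (-(ε / 2) * r)) := by
  set g : ℝ → ℝ := fun x => Real.log (F x) with hg_def
  have hFne : ∀ x, F x ≠ 0 := fun x => (hFpos x).ne'
  have hgsmooth : ContDiff ℝ (⊤ : ℕ∞) g := hFsmooth.log hFne
  have hgdiff : Differentiable ℝ g := hgsmooth.differentiable (by simp)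
  have hg'diff : Differentiable ℝ (deriv g) := by
    have h2 : ContDiff ℝ ((⊤ : ℕ∞) : WithTop ℕ∞) g := hgsmooth.of_le (by simp)
    exact ((contDiff_infty_iff_deriv.mp h2).2).differentiable
      (by simp : ((⊤ : ℕ∞) : WithTop ℕ∞) ≠ 0)
  have hmono : Monotone (deriv g) := by
    apply monotone_of_deriv_nonneg hg'diff
    exact hconv
  -- slope bounds from convexity
  have slope_up : ∀ r : ℝ, deriv g r ≤ g (r + 1) - g r := by
    intro r
    obtain ⟨x, hx, hx'⟩ := exists_deriv_eq_slope g (by linarith : r < r + 1)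
      (hgdiff.continuous.continuousOn) (hgdiff.differentiableOn)
    have : deriv g r ≤ deriv g x := hmono hx.1.le
    rw [hx'] at this
    simpa using this
  have slope_dn : ∀ r : ℝ, g r - g (r - 1) ≤ deriv g r := by
    intro r
    obtain ⟨x, hx, hx'⟩ := exists_deriv_eq_slope g (by linarith : r - 1 < r)
      (hgdiff.continuous.continuousOn) (hgdiff.differentiableOn)
    have : deriv g x ≤ deriv g r := hmono hx.2.le
    rw [hx'] at this
    simpa using this
  -- E and δ
  set δ : ℝ → ℝ := fun r => F r / (c * Real.exp (cplus * r)) - 1 with hδ_def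
  set E : ℝ → ℝ := fun r => g r - (Real.log c + cplus * r) with hE_def
  have hE_eq : ∀ r, E r = Real.log (1 + δ r) := by
    intro r
    have hpos : (0:ℝ) < c * Real.exp (cplus * r) := by positivity
    have : (1:ℝ) + δ r = F r / (c * Real.exp (cplus * r)) := by simp [hδ_def]
    rw [this, Real.log_div (hFne r) hpos.ne', Real.log_mul hc.ne' (Real.exp_pos _).ne',
      Real.log_exp]
  obtain ⟨C, hC⟩ := hgrowth.bound
  have hC' : ∀ᶠ r in atTop, |δ r| ≤ |C| * Real.exp (-ε * r) := by
    filter_upwards [hC] with r hr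
    have := hr
    rw [Real.norm_eq_abs, Real.norm_eq_abs, abs_of_pos (Real.exp_pos _)] at this
    calc |δ r| ≤ C * Real.exp (-ε * r) := this
      _ ≤ |C| * Real.exp (-ε * r) := by
          gcongr; exact le_abs_self C
  have hsmall : ∀ᶠ r in atTop, |C| * Real.exp (-ε * r) ≤ 1/2 := by
    have htend : Tendsto (fun r => |C| * Real.exp (-ε * r)) atTop (nhds 0) := by
      have h0 : Tendsto (fun r : ℝ => Real.exp (-ε * r)) atTop (nhds 0) :=
        Real.tendsto_exp_comp_nhds_zero.mpr
          (Tendsto.const_mul_atTop_of_neg (by linarith) tendsto_id)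
      simpa using h0.const_mul |C|
    exact htend.eventually (eventually_le_nhds (by norm_num))
  have hEbound : ∀ᶠ r in atTop, |E r| ≤ 2 * |C| * Real.exp (-ε * r) := by
    filter_upwards [hC', hsmall] with r h1 h2
    have hδle : |δ r| ≤ 1/2 := h1.trans h2
    have : (1:ℝ)/2 ≤ 1 + δ r := by
      have := abs_le.mp hδle
      linarith [this.1]
    have := abs_log_le_two_mul (1 + δ r) this
    rw [← hE_eq] at this
    have h3 : |1 + δ r - 1| = |δ r| := by ring_nf
    rw [h3] at this
    calc |E r| ≤ 2 * |δ r| := this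
      _ ≤ 2 * (|C| * Real.exp (-ε * r)) := by linarith
      _ = 2 * |C| * Real.exp (-ε * r) := by ring
  rw [isBigO_iff]
  refine ⟨4 * |C| * Real.exp ε, ?_⟩
  obtain ⟨R, hR⟩ := eventually_atTop.mp hEbound
  rw [eventually_atTop]
  refine ⟨max (R + 1) 0, fun r hr => ?_⟩
  have hrR : R + 1 ≤ r := le_trans (le_max_left _ _) hr
  have hr0 : 0 ≤ r := le_trans (le_max_right _ _) hr
  have hEm : ∀ s : ℝ, r - 1 ≤ s → |E s| ≤ 2 * |C| * Real.exp (-ε * (r - 1)) := by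
    intro s hs
    have h1 : |E s| ≤ 2 * |C| * Real.exp (-ε * s) := hR s (by linarith)
    have h2 : Real.exp (-ε * s) ≤ Real.exp (-ε * (r - 1)) := by
      apply Real.exp_le_exp.mpr; nlinarith
    calc |E s| ≤ 2 * |C| * Real.exp (-ε * s) := h1
      _ ≤ 2 * |C| * Real.exp (-ε * (r - 1)) := by
          have : (0:ℝ) ≤ 2 * |C| := by positivity
          exact mul_le_mul_of_nonneg_left h2 this
  -- upper bound: deriv g r - cplus ≤ E (r+1) - E r
  have hup : deriv g r - cplus ≤ E (r + 1) - E r := by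
    have := slope_up r
    have hEgap : g (r + 1) - g r = E (r + 1) - E r + cplus := by
      simp only [hE_def]; ring
    linarith
  have hdn : E r - E (r - 1) ≤ deriv g r - cplus := by
    have := slope_dn r
    have hEgap : g r - g (r - 1) = E r - E (r - 1) + cplus := by
      simp only [hE_def]; ring
    linarith
  have hE1 := hEm (r - 1) le_rfl
  have hE2 := hEm r (by linarith)
  have hE3 := hEm (r + 1) (by linarith)
  have habs : |deriv g r - cplus| ≤ 4 * |C| * Real.exp (-ε * (r - 1)) := by
    rw [abs_le]
    constructor
    · have := abs_le.mp hE2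
      have := abs_le.mp hE1
      nlinarith [abs_le.mp hE2, abs_le.mp hE1, hdn]
    · nlinarith [abs_le.mp hE2, abs_le.mp hE3, hup]
  have hexp : Real.exp (-ε * (r - 1)) = Real.exp ε * Real.exp (-ε * r) := by
    rw [← Real.exp_add]; ring_nf
  have hexp2 : Real.exp (-ε * r) ≤ Real.exp (-(ε / 2) * r) := by
    apply Real.exp_le_exp.mpr; nlinarith
  rw [Real.norm_eq_abs, Real.norm_eq_abs, abs_of_pos (Real.exp_pos _)]
  calc |deriv g r - cplus| ≤ 4 * |C| * Real.exp (-ε * (r - 1)) := habs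
    _ = 4 * |C| * Real.exp ε * Real.exp (-ε * r) := by rw [hexp]; ring
    _ ≤ 4 * |C| * Real.exp ε * Real.exp (-(ε / 2) * r) := by
        have h0 : (0:ℝ) ≤ 4 * |C| * Real.exp ε := by positivity
        exact mul_le_mul_of_nonneg_left hexp2 h0
end

section
/- For all ξ > 0, log(1 + 4/(√2(ξ + ξ⁻¹) − 2)) ≥ 2√2/(ξ + ξ⁻¹). -/
/-!
With `u = √2 / (ξ + ξ⁻¹)` one has `0 < u < 1` and `1 + 4 / (√2 (ξ + ξ⁻¹) - 2) = (1 + u) / (1 - u)`,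
so the claim is `2u ≤ log (1 + u) - log (1 - u) = 2 artanh u`, and `2u` is the first term of the
series `∑ 2 u^(2k+1) / (2k+1)` of nonnegative terms.
-/

open Real

lemma two_mul_le_log_one_add_sub_log_one_sub {x : ℝ} (h0 : 0 ≤ x) (h1 : x < 1) :
    2 * x ≤ log (1 + x) - log (1 - x) := by
  have hsum := hasSum_log_sub_log_of_abs_lt_one (abs_lt.2 ⟨by linarith, h1⟩)
  simpa using le_hasSum hsum 0 fun k _ => by positivity

lemma two_le_add_inv {ξ : ℝ} (hξ : 0 < ξ) : 2 ≤ ξ + ξ⁻¹ := by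
  have h : ξ + ξ⁻¹ - 2 = (ξ - 1) ^ 2 / ξ := by field_simp; ring
  linarith [show 0 ≤ (ξ - 1) ^ 2 / ξ by positivity]

lemma two_mul_sqrt_two_div_le_log {t : ℝ} (ht : √2 < t) :
    2 * √2 / t ≤ log (1 + 4 / (√2 * t - 2)) := by
  have hsqrt : √2 ^ 2 = 2 := sq_sqrt zero_le_two
  have hden : 0 < √2 * t - 2 := by
    nlinarith [mul_lt_mul_of_pos_left ht (sqrt_pos.2 two_pos)]
  have ht0 : 0 < t := (sqrt_nonneg 2).trans_lt ht
  set u := √2 / t with hu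
  have hu0 : 0 ≤ u := by positivity
  have hu1 : u < 1 := (div_lt_one ht0).2 ht
  have harg : 1 + 4 / (√2 * t - 2) = (1 + u) / (1 - u) := by
    rw [hu, eq_div_iff (by linarith)]
    field_simp
    linear_combination -2 * t * hsqrt
  calc 2 * √2 / t = 2 * u := by rw [hu, mul_div_assoc]
    _ ≤ log (1 + u) - log (1 - u) := two_mul_le_log_one_add_sub_log_one_sub hu0 hu1
    _ = log (1 + 4 / (√2 * t - 2)) := by
      rw [harg, log_div (by linarith) (by linarith)]

theorem stmt9 (ξ : ℝ) (hξ : 0 < ξ) :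
    2 * Real.sqrt 2 / (ξ + ξ⁻¹) ≤ Real.log (1 + 4 / (Real.sqrt 2 * (ξ + ξ⁻¹) - 2)) := by
  have hsqrt_lt_two : √2 < 2 := (sqrt_lt' two_pos).2 (by norm_num)
  exact two_mul_sqrt_two_div_le_log (hsqrt_lt_two.trans_le (two_le_add_inv hξ))
end

section
/- Let F : ℝ → ℝ be positive, C¹, with log F convex and F' ≥ 0, and suppose (log F)'(r) → c₊ > 0 as r → +∞ and (log F)'(r) → 0 as r → -∞, with ∫_{-∞}^0 (log F)' < ∞. Then for fixed x,t > 0 there is a unique real a = a(x,t) solving h(a) = π√(xt)(1 − a), where h(a) := ∫_{-∞}^{a} (log F)'((x/t)ζ)/√(a−ζ) dζ, because h is nondecreasing in a while the right-hand side is strictly decreasing in a. -/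
open Filter Real MeasureTheory

theorem stmt11 (F : ℝ → ℝ) (cplus : ℝ) (hcplus : 0 < cplus)
    (hFpos : ∀ r, 0 < F r)
    (hF : ContDiff ℝ 1 F)
    (hF' : ∀ r, 0 ≤ deriv F r)
    (hconv : ConvexOn ℝ Set.univ (fun r => Real.log (F r)))
    (htop : Tendsto (fun r => deriv (fun x => Real.log (F x)) r) atTop (nhds cplus))
    (hbot : Tendsto (fun r => deriv (fun x => Real.log (F x)) r) atBot (nhds 0))
    (hintbot : IntegrableOn (fun r => deriv (fun x => Real.log (F x)) r) (Set.Iic 0))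
    (x t : ℝ) (hx : 0 < x) (ht : 0 < t) :
    ∃! a : ℝ, (∫ ζ in Set.Iic a,
        deriv (fun r => Real.log (F r)) ((x/t) * ζ) / Real.sqrt (a - ζ))
      = Real.pi * Real.sqrt (x*t) * (1 - a) := by
  set c : ℝ := x / t with hcdef
  have hc0 : 0 < c := div_pos hx ht
  set L : ℝ → ℝ := fun r => deriv (fun x => Real.log (F x)) r with hLdef
  have hFdiff : ∀ r, DifferentiableAt ℝ F r := fun r => (hF.differentiable one_ne_zero) r
  have hlogder : ∀ r, HasDerivAt (fun x => Real.log (F x)) (deriv F r / F r) r :=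
    fun r => (hFdiff r).hasDerivAt.log (hFpos r).ne'
  have hLr : ∀ r, L r = deriv F r / F r := fun r => (hlogder r).deriv
  have hLmono : Monotone L := by
    have h := hconv.monotoneOn_deriv (fun r _ => (hlogder r).differentiableAt)
    exact fun a b hab => h (Set.mem_univ a) (Set.mem_univ b) hab
  have hLcont : Continuous L := by
    have h1 : Continuous (deriv F) := hF.continuous_deriv le_rfl
    have h2 : Continuous fun r => deriv F r / F r := h1.div hF.continuous fun r => (hFpos r).ne'
    exact h2.congr fun r => (hLr r).symm
  have hL0 : ∀ r, 0 ≤ L r := fun r => hLmono.le_of_tendsto hbot r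
  have hLc : ∀ r, L r ≤ cplus := fun r => hLmono.ge_of_tendsto htop r
  -- L integrable on every Iic M
  have hLint : ∀ M : ℝ, IntegrableOn L (Set.Iic M) := by
    intro M
    have h1 : IntegrableOn L (Set.Icc 0 M) := hLcont.continuousOn.integrableOn_Icc
    have h2 : IntegrableOn L (Set.Iic 0 ∪ Set.Icc 0 M) := hintbot.union h1
    refine h2.mono_set fun r hr => ?_
    rcases le_or_gt r 0 with h | h
    · exact Or.inl h
    · exact Or.inr ⟨h.le, hr⟩
  -- integrability of reflected-scaled L on Ioi 1
  have hGint : ∀ b : ℝ, IntegrableOn (fun u => L (c * (b - u))) (Set.Ioi 1) := by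
    intro b
    have hrefl : IntegrableOn (fun v => L (c * b - v)) (Set.Ioi c) := by
      have hmp : MeasurePreserving (fun v : ℝ => c * b - v) volume volume :=
        Measure.measurePreserving_sub_left volume (c * b)
      have hemb : MeasurableEmbedding (fun v : ℝ => c * b - v) :=
        (MeasurableEquiv.subLeft (c * b)).measurableEmbedding
      have h1 := (hmp.integrableOn_comp_preimage hemb (s := Set.Iic (c * b - c))
        (f := L)).mpr (hLint (c * b - c))
      have h2 : (fun v : ℝ => c * b - v) ⁻¹' Set.Iic (c * b - c) = Set.Ici c := by
        ext v; simp [Set.mem_preimage, sub_le_sub_iff_left]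
      rw [h2] at h1
      exact (h1.mono_set Set.Ioi_subset_Ici_self)
    have := (integrableOn_Ioi_comp_mul_left_iff (fun v => L (c * b - v)) 1 hc0).mpr
      (by rwa [mul_one])
    refine this.congr_fun (fun u _ => ?_) measurableSet_Ioi
    ring_nf
  -- the transformed integrand and its integrability on Ioi 0
  set f : ℝ → ℝ → ℝ := fun a u => L (c * (a - u)) / Real.sqrt u with hfdef
  have hfmeas : ∀ a : ℝ, AEStronglyMeasurable (f a) (volume.restrict (Set.Ioi 0)) := by
    intro a
    have : Measurable (f a) := by
      have h1 : Measurable fun u : ℝ => L (c * (a - u)) :=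
        hLcont.measurable.comp (by fun_prop)
      exact h1.div Real.continuous_sqrt.measurable
    exact this.aestronglyMeasurable
  have hBint : IntegrableOn (fun u : ℝ => cplus * u ^ (-(1/2) : ℝ)) (Set.Ioc 0 1) := by
    have h := (intervalIntegral.intervalIntegrable_rpow' (a := 0) (b := 1)
      (r := (-(1/2) : ℝ)) (by norm_num))
    rw [intervalIntegrable_iff_integrableOn_Ioc_of_le (by norm_num)] at h
    exact h.const_mul cplus
  have hfb1 : ∀ a : ℝ, ∀ u ∈ Set.Ioc (0:ℝ) 1, ‖f a u‖ ≤ cplus * u ^ (-(1/2) : ℝ) := by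
    intro a u hu
    have hu0 : 0 < u := hu.1
    have hsq : 0 < Real.sqrt u := Real.sqrt_pos.mpr hu0
    have h1 : ‖f a u‖ = L (c * (a - u)) / Real.sqrt u := by
      rw [Real.norm_eq_abs, abs_of_nonneg (div_nonneg (hL0 _) (Real.sqrt_nonneg _))]
    rw [h1]
    have h2 : L (c * (a - u)) / Real.sqrt u ≤ cplus / Real.sqrt u := by
      gcongr; exact hLc _
    refine h2.trans (le_of_eq ?_)
    rw [Real.rpow_neg hu0.le, div_eq_mul_inv, ← Real.sqrt_eq_rpow]
  have hfb2 : ∀ a b : ℝ, a ≤ b → ∀ u ∈ Set.Ioi (1:ℝ), ‖f a u‖ ≤ L (c * (b - u)) := by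
    intro a b hab u hu
    have hu1 : (1:ℝ) < u := hu
    have hsq : 1 ≤ Real.sqrt u := by
      rw [show (1:ℝ) = Real.sqrt 1 from (Real.sqrt_one).symm]
      exact Real.sqrt_le_sqrt hu1.le
    have h1 : ‖f a u‖ = L (c * (a - u)) / Real.sqrt u := by
      rw [Real.norm_eq_abs, abs_of_nonneg (div_nonneg (hL0 _) (Real.sqrt_nonneg _))]
    rw [h1]
    calc L (c * (a - u)) / Real.sqrt u ≤ L (c * (a - u)) / 1 := by
          gcongr; exact hL0 _
      _ = L (c * (a - u)) := div_one _
      _ ≤ L (c * (b - u)) := hLmono (by nlinarith)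
  have hfmeas' : ∀ a : ℝ, Measurable (f a) := by
    intro a
    have h1 : Measurable fun u : ℝ => L (c * (a - u)) :=
      hLcont.measurable.comp (by fun_prop)
    exact h1.div Real.continuous_sqrt.measurable
  have hIoi_split : Set.Ioi (0:ℝ) = Set.Ioc 0 1 ∪ Set.Ioi 1 :=
    (Set.Ioc_union_Ioi_eq_Ioi zero_le_one).symm
  have hfint : ∀ a : ℝ, IntegrableOn (f a) (Set.Ioi 0) := by
    intro a
    rw [hIoi_split]
    refine IntegrableOn.union ?_ ?_
    · exact hBint.mono' (hfmeas' a).aestronglyMeasurable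
        ((ae_restrict_iff' measurableSet_Ioc).mpr (Eventually.of_forall (hfb1 a)))
    · exact (hGint a).mono' (hfmeas' a).aestronglyMeasurable
        ((ae_restrict_iff' measurableSet_Ioi).mpr (Eventually.of_forall (hfb2 a a le_rfl)))
  set H : ℝ → ℝ := fun a => ∫ u in Set.Ioi (0:ℝ), f a u with hHdef
  have hsub : ∀ a : ℝ, (∫ ζ in Set.Iic a,
      deriv (fun r => Real.log (F r)) ((x/t) * ζ) / Real.sqrt (a - ζ)) = H a := by
    intro a
    have hmp : MeasurePreserving (fun u : ℝ => a - u) volume volume :=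
      Measure.measurePreserving_sub_left volume a
    have hemb : MeasurableEmbedding (fun u : ℝ => a - u) :=
      (MeasurableEquiv.subLeft a).measurableEmbedding
    have h1 := hmp.setIntegral_preimage_emb hemb
      (fun ζ => deriv (fun r => Real.log (F r)) ((x/t) * ζ) / Real.sqrt (a - ζ)) (Set.Iio a)
    have h2 : (fun u : ℝ => a - u) ⁻¹' (Set.Iio a) = Set.Ioi 0 := by
      ext u; simp [Set.mem_preimage, sub_lt_iff_lt_add]
    rw [h2] at h1
    rw [← setIntegral_congr_set Iio_ae_eq_Iic, ← h1]
    refine setIntegral_congr_fun measurableSet_Ioi fun u hu => ?_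
    simp only [sub_sub_cancel]; rfl
  have hHmono : Monotone H := by
    intro a b hab
    refine setIntegral_mono_on (hfint a) (hfint b) measurableSet_Ioi fun u hu => ?_
    have : c * (a - u) ≤ c * (b - u) :=
      mul_le_mul_of_nonneg_left (sub_le_sub_right hab u) hc0.le
    show L (c * (a - u)) / Real.sqrt u ≤ L (c * (b - u)) / Real.sqrt u
    have hsq : 0 < Real.sqrt u := Real.sqrt_pos.mpr (Set.mem_Ioi.mp hu)
    exact (div_le_div_iff_of_pos_right hsq).mpr (hLmono this)
  have hHnonneg : ∀ a, 0 ≤ H a := fun a =>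
    setIntegral_nonneg measurableSet_Ioi fun u _ => div_nonneg (hL0 _) (Real.sqrt_nonneg _)
  have hHcont : Continuous H := by
    rw [continuous_iff_continuousAt]
    intro a₀
    set bound : ℝ → ℝ :=
      fun u => if u ≤ 1 then cplus * u ^ (-(1/2):ℝ) else L (c * (a₀ + 1 - u)) with hbd
    refine continuousAt_of_dominated (bound := bound)
      (Eventually.of_forall fun a => (hfmeas' a).aestronglyMeasurable) ?_ ?_ ?_
    · filter_upwards [eventually_le_nhds (lt_add_one a₀)] with a ha
      refine (ae_restrict_iff' measurableSet_Ioi).mpr (Eventually.of_forall fun u hu => ?_)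
      by_cases h1 : u ≤ 1
      · rw [hbd]; simp only [if_pos h1]; exact hfb1 a u ⟨hu, h1⟩
      · rw [hbd]; simp only [if_neg h1]; exact hfb2 a (a₀+1) ha u (lt_of_not_ge h1)
    · have hbint : IntegrableOn bound (Set.Ioi 0) := by
        rw [hIoi_split]
        refine IntegrableOn.union ?_ ?_
        · exact hBint.congr_fun (fun u hu => by rw [hbd]; simp [if_pos hu.2])
            measurableSet_Ioc
        · exact (hGint (a₀+1)).congr_fun
            (fun u hu => by rw [hbd]; simp [if_neg (not_le.mpr (Set.mem_Ioi.mp hu))])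
            measurableSet_Ioi
      exact hbint
    · refine Eventually.of_forall fun u => ?_
      have hcontf : Continuous fun a => f a u := by
        have : Continuous fun a => L (c * (a - u)) := hLcont.comp (continuous_const.mul (continuous_id.sub continuous_const))
        exact this.div_const _
      exact hcontf.continuousAt
  set K : ℝ := Real.pi * Real.sqrt (x*t) with hKdef
  have hK0 : 0 < K := mul_pos Real.pi_pos (Real.sqrt_pos.mpr (mul_pos hx ht))
  set φ : ℝ → ℝ := fun a => H a + K * a with hφdef
  have hkey : ∀ a : ℝ, ((∫ ζ in Set.Iic a,
      deriv (fun r => Real.log (F r)) ((x/t) * ζ) / Real.sqrt (a - ζ)) = K * (1 - a))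
      ↔ φ a = K := by
    intro a
    rw [hsub a]
    have hring : K * (1 - a) = K - K * a := by ring
    rw [hring, hφdef]
    constructor <;> intro h <;> simp only [] at h ⊢ <;> linarith
  have hφmono : StrictMono φ := by
    have h1 : StrictMono fun a : ℝ => K * a := fun a b hab => by
      simp only []; nlinarith
    exact hHmono.add_strictMono h1
  have hφcont : Continuous φ := hHcont.add (continuous_const.mul continuous_id)
  set alo : ℝ := min 0 ((K - H 0)/K) with halodef
  have halo0 : alo ≤ 0 := min_le_left _ _
  have h1 : φ alo ≤ K := by
    have hH : H alo ≤ H 0 := hHmono halo0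
    have h2 : K * alo ≤ K - H 0 := by
      have h3 : alo ≤ (K - H 0)/K := min_le_right _ _
      calc K * alo ≤ K * ((K - H 0)/K) := by nlinarith
        _ = K - H 0 := by field_simp
    simp only [hφdef]; linarith
  have h2 : K ≤ φ 1 := by
    have := hHnonneg 1
    simp only [hφdef]; nlinarith
  have h3 : alo ≤ 1 := le_trans halo0 zero_le_one
  obtain ⟨a, -, ha⟩ := intermediate_value_Icc h3 hφcont.continuousOn ⟨h1, h2⟩
  refine ⟨a, (hkey a).mpr ha, fun b hb => hφmono.injective ?_⟩
  rw [ha]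
  exact (hkey b).mp hb
end

section
/- For y > 0 let a₀(y) = (√(y+1)−1)²/y, a₂(y) = y^{3/2}/(√(y+1)(√(y+1)−1)²)·( (1/(4πc₊))·(1−2√(y+1))/(y+1)·L² − j ), and F₃(y) = (2c₊j/π)√(1+y) − (1/48)log(1+y) + ((2c₊j/π) + L²/(2π²) + 1/24)·log(√(1+y)−1), where c₊ > 0, L, j are real constants. Then, with y = (π²/c₊²)xt, the identity (y/x)²·F₃''(y) − (t^{1/2}/(2x^{3/2}))·a₂(y) = y²(−3y + 2√(y+1) − 3)/(96 x² (y+1)^{5/2} (√(y+1)−1)²) holds, and the function y ↦ y²(−3y+2√(y+1)−3)/((y+1)^{5/2}(√(y+1)−1)²) is bounded on (0,∞). -/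
/-!
Write `s = √(1 + y)`, so that `y = s² - 1`. Both derivatives of `F₃` are rational in `s`
(`d s / d y = 1 / (2 s)`), and for `y = π² x t / c₊²` one has `√t / x^{3/2} = (c₊ / π) √y / x²`,
which cancels the `y^{3/2}` of `a₂ y` up to `(y / x)²`. After dividing by `(y / x)²` the identity
becomes one between rational functions of `s`. The remainder equals
`(s + 1)² (2 - 3 s) / s⁴`, which is at most `12` in absolute value for `s ≥ 1`.
-/

open Real Topology

noncomputable def sqrtLogProfile (A B w : ℝ) : ℝ :=
  A * √(1 + w) - 1 / 48 * log (1 + w) + B * log (√(1 + w) - 1)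

/- The first and second derivatives of `sqrtLogProfile A B` at `w`, as functions of
`s = √(1 + w)`. -/
noncomputable def sqrtLogProfileDeriv (A B s : ℝ) : ℝ :=
  A / (2 * s) - 1 / (48 * s ^ 2) + B / (2 * s * (s - 1))

noncomputable def sqrtLogProfileDeriv2 (A B s : ℝ) : ℝ :=
  -A / (4 * s ^ 3) + 1 / (48 * s ^ 4) - B * (2 * s - 1) / (4 * s ^ 3 * (s - 1) ^ 2)

lemma one_lt_sqrt_one_add {z : ℝ} (hz : 0 < z) : 1 < √(1 + z) := by
  rw [lt_sqrt zero_le_one]; linarith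

lemma hasDerivAt_sqrt_one_add {z : ℝ} (hz : -1 < z) :
    HasDerivAt (fun w => √(1 + w)) (1 / (2 * √(1 + z))) z := by
  simpa using ((hasDerivAt_id' z).const_add 1).sqrt (by simp; linarith)

lemma hasDerivAt_sqrtLogProfile (A B : ℝ) {z : ℝ} (hz : 0 < z) :
    HasDerivAt (sqrtLogProfile A B) (sqrtLogProfileDeriv A B √(1 + z)) z := by
  have hs := one_lt_sqrt_one_add hz
  have hσ := hasDerivAt_sqrt_one_add (z := z) (by linarith)
  have hlog := ((hasDerivAt_id' z).const_add 1).log (by positivity)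
  refine (((hσ.const_mul A).sub (hlog.const_mul (1 / 48))).add
    (((hσ.sub_const 1).log (by linarith)).const_mul B)).congr_deriv ?_
  rw [sqrtLogProfileDeriv, sq_sqrt (by linarith)]
  field_simp

lemma hasDerivAt_sqrtLogProfileDeriv (A B : ℝ) {s : ℝ} (hs : 1 < s) :
    HasDerivAt (sqrtLogProfileDeriv A B) (2 * s * sqrtLogProfileDeriv2 A B s) s := by
  have hs0 : s ≠ 0 := by positivity
  have hs1 : s - 1 ≠ 0 := by linarith
  have hid := hasDerivAt_id' s
  refine ((((hasDerivAt_const s A).div (hid.const_mul 2) (by simpa)).sub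
    ((hasDerivAt_const s 1).div ((hasDerivAt_pow 2 s).const_mul 48) (by simpa))).add
    ((hasDerivAt_const s B).div ((hid.const_mul 2).mul (hid.sub_const 1))
      (by simp [hs0, hs1]))).congr_deriv ?_
  simp only [sqrtLogProfileDeriv2, Pi.mul_apply]
  field_simp
  ring

lemma deriv_deriv_sqrtLogProfile (A B : ℝ) {y : ℝ} (hy : 0 < y) :
    deriv (deriv (sqrtLogProfile A B)) y = sqrtLogProfileDeriv2 A B √(1 + y) := by
  have hderiv : deriv (sqrtLogProfile A B) =ᶠ[𝓝 y]
      fun w => sqrtLogProfileDeriv A B √(1 + w) := by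
    filter_upwards [Ioi_mem_nhds hy] with w hw
    exact (hasDerivAt_sqrtLogProfile A B hw).deriv
  have hs := one_lt_sqrt_one_add hy
  have hσ := hasDerivAt_sqrt_one_add (z := y) (by linarith)
  rw [hderiv.deriv_eq]
  refine ((hasDerivAt_sqrtLogProfileDeriv A B hs).comp y hσ).deriv.trans ?_
  field_simp

lemma sqrt_pow_four {x : ℝ} (hx : 0 ≤ x) : √x ^ 4 = x ^ 2 := by
  rw [show 4 = 2 * 2 from rfl, pow_mul, sq_sqrt hx]

lemma rpow_half_div_rpow_three_halves {c x t : ℝ} (hc : 0 < c) (hx : 0 < x) (ht : 0 ≤ t) :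
    t ^ ((1 : ℝ) / 2) / x ^ ((3 : ℝ) / 2) = c / π * √(π ^ 2 * x * t / c ^ 2) / x ^ 2 := by
  rw [← sqrt_eq_rpow, rpow_div_two_eq_sqrt _ hx.le, rpow_ofNat, sqrt_div' _ (sq_nonneg c),
    sqrt_sq hc.le, sqrt_mul' _ ht, sqrt_mul (sq_nonneg π), sqrt_sq pi_pos.le,
    ← sqrt_pow_four hx.le]
  field_simp

lemma sq_div_mul_sqrtLogProfileDeriv2_sub_eq {c x y : ℝ} (L j : ℝ) (hc : 0 < c) (hx : 0 < x)
    (hy : 0 < y) :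
    (y / x) ^ 2 *
        sqrtLogProfileDeriv2 (2 * c * j / π) (2 * c * j / π + L ^ 2 / (2 * π ^ 2) + 1 / 24) √(1 + y)
      - c / π * √y / x ^ 2 / 2 * (y ^ ((3 : ℝ) / 2) / (√(y + 1) * (√(y + 1) - 1) ^ 2) *
        ((1 / (4 * π * c)) * (1 - 2 * √(y + 1)) / (y + 1) * L ^ 2 - j))
      = y ^ 2 * (-3 * y + 2 * √(y + 1) - 3)
          / (96 * x ^ 2 * (y + 1) ^ ((5 : ℝ) / 2) * (√(y + 1) - 1) ^ 2) := by
  rw [rpow_div_two_eq_sqrt _ hy.le, rpow_div_two_eq_sqrt _ (by linarith), rpow_ofNat, rpow_ofNat,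
    add_comm y 1]
  have hs := one_lt_sqrt_one_add hy
  have hy_eq : y = √(1 + y) ^ 2 - 1 := by rw [sq_sqrt (by linarith)]; ring
  have hy4 := sqrt_pow_four hy.le
  set s := √(1 + y)
  have hs1 : s - 1 ≠ 0 := by linarith
  simp only [sqrtLogProfileDeriv2]
  field_simp
  rw [hy4, hy_eq]
  ring

lemma sq_mul_div_rpow_five_halves_eq {y : ℝ} (hy : 0 < y) :
    y ^ 2 * (-3 * y + 2 * √(y + 1) - 3) / ((y + 1) ^ ((5 : ℝ) / 2) * (√(y + 1) - 1) ^ 2)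
      = (√(1 + y) + 1) ^ 2 * (2 - 3 * √(1 + y)) / √(1 + y) ^ 4 := by
  rw [rpow_div_two_eq_sqrt _ (by linarith), rpow_ofNat, add_comm y 1]
  have hs := one_lt_sqrt_one_add hy
  have hy_eq : y = √(1 + y) ^ 2 - 1 := by rw [sq_sqrt (by linarith)]; ring
  set s := √(1 + y)
  have hs1 : s - 1 ≠ 0 := by linarith
  rw [hy_eq]
  field_simp
  ring

lemma abs_sq_mul_div_pow_four_le {s : ℝ} (hs : 1 ≤ s) :
    |(s + 1) ^ 2 * (2 - 3 * s) / s ^ 4| ≤ 12 := by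
  have hs0 : 0 < s := by linarith
  rw [abs_div, abs_mul, abs_of_nonpos (by linarith : 2 - 3 * s ≤ 0),
    abs_of_nonneg (by positivity), abs_of_pos (by positivity), div_le_iff₀ (by positivity)]
  calc (s + 1) ^ 2 * -(2 - 3 * s) ≤ (2 * s) ^ 2 * (3 * s) := by
        gcongr <;> linarith
    _ = 12 * s ^ 3 := by ring
    _ ≤ 12 * s ^ 4 := by gcongr; norm_num

theorem stmt15 (cplus L j : ℝ) (hc : 0 < cplus) :
    let F₃ : ℝ → ℝ := fun y => (2*cplus*j/Real.pi) * Real.sqrt (1+y)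
      - (1/48) * Real.log (1+y)
      + ((2*cplus*j/Real.pi) + L^2/(2*Real.pi^2) + 1/24) * Real.log (Real.sqrt (1+y) - 1)
    let a₂ : ℝ → ℝ := fun y => y^((3:ℝ)/2) / (Real.sqrt (y+1) * (Real.sqrt (y+1) - 1)^2) *
      ((1/(4*Real.pi*cplus)) * (1 - 2*Real.sqrt (y+1)) / (y+1) * L^2 - j)
    (∀ x t : ℝ, 0 < x → 0 < t →
      let y := Real.pi^2 * x * t / cplus^2
      (y/x)^2 * deriv (deriv F₃) y - t^((1:ℝ)/2) / (2 * x^((3:ℝ)/2)) * a₂ y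
        = y^2 * (-3*y + 2*Real.sqrt (y+1) - 3)
          / (96 * x^2 * (y+1)^((5:ℝ)/2) * (Real.sqrt (y+1) - 1)^2)) ∧
    ∃ C, ∀ y > (0:ℝ),
      |y^2 * (-3*y + 2*Real.sqrt (y+1) - 3)
        / ((y+1)^((5:ℝ)/2) * (Real.sqrt (y+1) - 1)^2)| ≤ C := by
  intro F₃ a₂
  refine ⟨fun x t hx ht => ?_, 12, fun y hy => ?_⟩
  · intro y
    have hy : 0 < y := by positivity
    have hF₃ : deriv (deriv F₃) y = sqrtLogProfileDeriv2 (2 * cplus * j / π)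
        (2 * cplus * j / π + L ^ 2 / (2 * π ^ 2) + 1 / 24) √(1 + y) :=
      deriv_deriv_sqrtLogProfile _ _ hy
    rw [hF₃, div_mul_eq_div_div_swap (t ^ _), rpow_half_div_rpow_three_halves hc hx ht.le]
    exact sq_div_mul_sqrtLogProfileDeriv2_sub_eq L j hc hx hy
  · rw [sq_mul_div_rpow_five_halves_eq hy]
    exact abs_sq_mul_div_pow_four_le (one_lt_sqrt_one_add hy).le
end
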